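/- Suppose each project valuation v_k is monotone XoS with v_k(∅)=0. Let A be any allocation and let (p*, z*) be dual feasible. Then there exist an allocation S and a payment vector p̄ such that (S, p̄) is stable, SW(S) ≥ SW(A), and Σ_{i∈𝒩} p̄_i ≤ Σ_{i∈𝒩} p*_i + Σ_{k∈𝒫} z*_k. In particular, if Σ_i p*_i + Σ_k z*_k ≤ α·SW(A) for some α ≥ 1, then Σ_i p̄_i ≤ α·SW(S), yielding an (α, α)-core stable solution. -/

import Mathlib

/-!
Take an assignment of agents to projects of maximum welfare and, for each project, an XoS clause
supporting its valuation at the agents it receives; pay each agent its weight in its own project's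
clause, so that the payments add up to the welfare. A coalition `T` blocking project `k` is ruled
out by moving `U = S_k ∪ T` to `k`: the other projects keep at least the clause weights of the
agents they retain, so the welfare would rise by `v_k(U) - p̄(U) > 0`. The maximum welfare is at
least `SW(A)` and, by dual feasibility, at most the dual objective.
-/

open Finset

theorem exists_supporting_clause {ι J : Type*} [Fintype J] [Nonempty J]
    {v : Finset ι → ℝ} {a : J → ι → ℝ}
    (hv : ∀ T, v T = (univ : Finset J).sup' univ_nonempty fun j => ∑ i ∈ T, a j i)
    (S : Finset ι) : ∃ j, v S = ∑ i ∈ S, a j i ∧ ∀ T, ∑ i ∈ T, a j i ≤ v T := by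
  obtain ⟨j, -, hj⟩ := exists_mem_eq_sup' univ_nonempty fun j => ∑ i ∈ S, a j i
  refine ⟨j, (hv S).trans hj, fun T => ?_⟩
  exact (hv T).symm ▸ le_sup' (fun j => ∑ i ∈ T, a j i) (mem_univ j)

namespace ProjectGame

variable {ι κ : Type*} [Fintype ι] [DecidableEq κ]

def fiber (f : ι → κ) (k : κ) : Finset ι := {i | f i = k}

@[simp]
theorem mem_fiber {f : ι → κ} {k : κ} {i : ι} : i ∈ fiber f k ↔ f i = k := by
  simp [fiber]

theorem pairwise_disjoint_fiber (f : ι → κ) {k l : κ} (hkl : k ≠ l) :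
    Disjoint (fiber f k) (fiber f l) :=
  disjoint_left.mpr fun _ hk hl => hkl ((mem_fiber.mp hk).symm.trans (mem_fiber.mp hl))

variable [Fintype κ]

theorem biUnion_fiber [DecidableEq ι] (f : ι → κ) : univ.biUnion (fiber f) = univ :=
  eq_univ_of_forall fun i => mem_biUnion.mpr ⟨f i, mem_univ _, mem_fiber.mpr rfl⟩

theorem exists_fiber_eq [DecidableEq ι] {A : κ → Finset ι}
    (hdisj : ∀ k l, k ≠ l → Disjoint (A k) (A l)) (hcover : univ.biUnion A = univ) :
    ∃ g : ι → κ, fiber g = A := by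
  have hmem : ∀ i, ∃ k, i ∈ A k := fun i => by
    simpa using (hcover.symm ▸ mem_univ i : i ∈ univ.biUnion A)
  choose g hg using hmem
  refine ⟨g, funext fun k => ext fun i => ⟨fun h => mem_fiber.mp h ▸ hg i, fun h => ?_⟩⟩
  by_contra hne
  exact disjoint_left.mp (hdisj (g i) k fun h' => hne (mem_fiber.mpr h')) (hg i) h

def welfare (v : κ → Finset ι → ℝ) (f : ι → κ) : ℝ := ∑ k, v k (fiber f k)

variable {v : κ → Finset ι → ℝ} {c : κ → ι → ℝ}

theorem welfare_eq_sum (f : ι → κ)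
    (hsupp : ∀ k, v k (fiber f k) = ∑ i ∈ fiber f k, c k i) :
    welfare v f = ∑ i, c (f i) i := by
  rw [welfare, ← sum_fiberwise univ f fun i => c (f i) i]
  refine sum_congr rfl fun k _ => (hsupp k).trans (sum_congr ?_ fun i hi => ?_)
  · ext i; simp
  · rw [mem_fiber.mp hi]

theorem add_sum_compl_le_welfare [DecidableEq ι] (hle : ∀ k T, ∑ i ∈ T, c k i ≤ v k T)
    (f : ι → κ) (k : κ) :
    v k (fiber f k) + ∑ i ∈ (fiber f k)ᶜ, c (f i) i ≤ welfare v f := by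
  have hmaps : ∀ i ∈ (fiber f k)ᶜ, f i ∈ univ.erase k := by simp
  rw [welfare, ← add_sum_erase _ _ (mem_univ k), ← sum_fiberwise_of_maps_to hmaps]
  gcongr with l hl
  calc ∑ i ∈ (fiber f k)ᶜ with f i = l, c (f i) i = ∑ i ∈ fiber f l, c l i := by
        refine sum_congr ?_ fun i hi => by rw [(mem_filter.mp hi).2]
        ext i
        simp only [mem_filter, mem_compl, mem_fiber]
        exact ⟨And.right, fun h => ⟨h ▸ ne_of_mem_erase hl, h⟩⟩
    _ ≤ v l (fiber f l) := hle l _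

theorem welfare_le_dual (pstar : ι → ℝ) (zstar : κ → ℝ)
    (hdual : ∀ k T, v k T ≤ ∑ i ∈ T, pstar i + zstar k) (f : ι → κ) :
    welfare v f ≤ ∑ i, pstar i + ∑ k, zstar k := by
  calc welfare v f ≤ ∑ k, (∑ i ∈ fiber f k, pstar i + zstar k) :=
        sum_le_sum fun k _ => hdual k _
    _ = ∑ i, pstar i + ∑ k, zstar k := by
        rw [sum_add_distrib, ← sum_fiberwise univ f pstar]
        simp [fiber]

theorem le_sum_of_forall_welfare_le [DecidableEq ι] (f : ι → κ)
    (hmax : ∀ g, welfare v g ≤ welfare v f) (hle : ∀ k T, ∑ i ∈ T, c k i ≤ v k T)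
    (hsupp : ∀ k, v k (fiber f k) = ∑ i ∈ fiber f k, c k i) (k : κ) (T : Finset ι) :
    v k (fiber f k ∪ T) ≤ ∑ i ∈ fiber f k ∪ T, c (f i) i := by
  set U := fiber f k ∪ T
  set f' : ι → κ := fun i => if i ∈ U then k else f i
  have hU : fiber f' k = U := by
    ext i
    by_cases hi : i ∈ U
    · simp [f', hi]
    · have : f i ≠ k := fun h => hi (mem_union_left _ (mem_fiber.mpr h))
      simp [f', hi, this]
  have hout : ∑ i ∈ Uᶜ, c (f' i) i = ∑ i ∈ Uᶜ, c (f i) i :=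
    sum_congr rfl fun i hi => by simp [f', mem_compl.mp hi]
  have hdev := add_sum_compl_le_welfare hle f' k
  rw [hU, hout] at hdev
  have hopt : welfare v f = ∑ i ∈ U, c (f i) i + ∑ i ∈ Uᶜ, c (f i) i := by
    rw [welfare_eq_sum f hsupp, sum_add_sum_compl]
  linarith [hmax f']

end ProjectGame

open ProjectGame

theorem stmt11_general {𝒩 P : Type*} [Fintype 𝒩] [DecidableEq 𝒩] [Fintype P]
    (v : P → Finset 𝒩 → ℝ)
    -- each v k is XoS: a pointwise maximum of finitely many nonnegative additive clauses
    (hxos : ∀ k, ∃ (r : ℕ) (a : Fin (r + 1) → 𝒩 → ℝ),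
      (∀ j i, 0 ≤ a j i) ∧
      (∀ T : Finset 𝒩,
        v k T = (Finset.univ : Finset (Fin (r + 1))).sup' Finset.univ_nonempty
          (fun j => ∑ i ∈ T, a j i)))
    -- A is an allocation
    (A : P → Finset 𝒩)
    (hAdisj : ∀ k l, k ≠ l → Disjoint (A k) (A l))
    (hAcover : Finset.univ.biUnion A = Finset.univ)
    -- (p*, z*) is dual feasible
    (pstar : 𝒩 → ℝ) (zstar : P → ℝ)
    (hdual : ∀ k (T : Finset 𝒩), v k T ≤ ∑ i ∈ T, pstar i + zstar k) :
    ∃ (S : P → Finset 𝒩) (pbar : 𝒩 → ℝ),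
      -- S is an allocation
      (∀ k l, k ≠ l → Disjoint (S k) (S l)) ∧
      Finset.univ.biUnion S = Finset.univ ∧
      -- p̄ is a payment vector
      (∀ i, 0 ≤ pbar i) ∧
      -- stability
      (∀ k (T : Finset 𝒩), v k (S k ∪ T) ≤ ∑ i ∈ S k ∪ T, pbar i) ∧
      -- SW(S) ≥ SW(A)
      (∑ k, v k (A k) ≤ ∑ k, v k (S k)) ∧
      -- total payments bounded by the dual objective
      (∑ i, pbar i ≤ ∑ i, pstar i + ∑ k, zstar k) ∧
      -- in particular: α-budget balance
      (∀ α : ℝ, 1 ≤ α → ∑ i, pstar i + ∑ k, zstar k ≤ α * ∑ k, v k (A k) →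
        ∑ i, pbar i ≤ α * ∑ k, v k (S k)) := by
  classical
  obtain ⟨g, hgA⟩ := exists_fiber_eq hAdisj hAcover
  have : Nonempty (𝒩 → P) := ⟨g⟩
  obtain ⟨f, hmax⟩ := Finite.exists_max (welfare v)
  have hclause : ∀ k, ∃ c : 𝒩 → ℝ, (∀ i, 0 ≤ c i) ∧
      v k (fiber f k) = ∑ i ∈ fiber f k, c i ∧ ∀ T, ∑ i ∈ T, c i ≤ v k T := fun k => by
    obtain ⟨r, a, hnonneg, hv⟩ := hxos k
    obtain ⟨j, hsupp, hle⟩ := exists_supporting_clause hv (fiber f k)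
    exact ⟨a j, hnonneg j, hsupp, hle⟩
  choose c hcnonneg hsupp hle using hclause
  have hpay : welfare v f = ∑ i, c (f i) i := welfare_eq_sum f hsupp
  have hwelfare : ∑ k, v k (A k) ≤ welfare v f := hgA ▸ hmax g
  refine ⟨fiber f, fun i => c (f i) i, fun k l => pairwise_disjoint_fiber f,
    biUnion_fiber f, fun i => hcnonneg _ i, le_sum_of_forall_welfare_le f hmax hle hsupp, hwelfare,
    hpay ▸ welfare_le_dual pstar zstar hdual f, fun α hα _ => ?_⟩
  rw [← welfare, ← hpay]
  exact le_mul_of_one_le_left (hpay ▸ sum_nonneg fun i _ => hcnonneg _ i) hα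

/-- Black-box reduction for XoS valuations: from any allocation `A` and dual feasible
`(p*, z*)` one can construct a stable solution `(S, p̄)` with `SW(S) ≥ SW(A)` and total
payments at most the dual objective; in particular, if the dual objective is at most
`α·SW(A)` then the payments are `α`-budget-balanced, yielding an `(α, α)`-core. -/
theorem stmt11 {𝒩 P : Type*} [Fintype 𝒩] [DecidableEq 𝒩] [Fintype P]
    (v : P → Finset 𝒩 → ℝ)
    (hzero : ∀ k, v k ∅ = 0)
    (hnonneg : ∀ k (T : Finset 𝒩), 0 ≤ v k T)
    (hmono : ∀ k (A B : Finset 𝒩), A ⊆ B → v k A ≤ v k B)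
    -- each v k is XoS: a pointwise maximum of finitely many nonnegative additive clauses
    (hxos : ∀ k, ∃ (r : ℕ) (a : Fin (r + 1) → 𝒩 → ℝ),
      (∀ j i, 0 ≤ a j i) ∧
      (∀ T : Finset 𝒩,
        v k T = (Finset.univ : Finset (Fin (r + 1))).sup' Finset.univ_nonempty
          (fun j => ∑ i ∈ T, a j i)))
    -- A is an allocation
    (A : P → Finset 𝒩)
    (hAdisj : ∀ k l, k ≠ l → Disjoint (A k) (A l))
    (hAcover : Finset.univ.biUnion A = Finset.univ)
    -- (p*, z*) is dual feasible
    (pstar : 𝒩 → ℝ) (zstar : P → ℝ)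
    (hpstar : ∀ i, 0 ≤ pstar i) (hzstar : ∀ k, 0 ≤ zstar k)
    (hdual : ∀ k (T : Finset 𝒩), v k T ≤ ∑ i ∈ T, pstar i + zstar k) :
    ∃ (S : P → Finset 𝒩) (pbar : 𝒩 → ℝ),
      -- S is an allocation
      (∀ k l, k ≠ l → Disjoint (S k) (S l)) ∧
      Finset.univ.biUnion S = Finset.univ ∧
      -- p̄ is a payment vector
      (∀ i, 0 ≤ pbar i) ∧
      -- stability
      (∀ k (T : Finset 𝒩), v k (S k ∪ T) ≤ ∑ i ∈ S k ∪ T, pbar i) ∧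
      -- SW(S) ≥ SW(A)
      (∑ k, v k (A k) ≤ ∑ k, v k (S k)) ∧
      -- total payments bounded by the dual objective
      (∑ i, pbar i ≤ ∑ i, pstar i + ∑ k, zstar k) ∧
      -- in particular: α-budget balance
      (∀ α : ℝ, 1 ≤ α → ∑ i, pstar i + ∑ k, zstar k ≤ α * ∑ k, v k (A k) →
        ∑ i, pbar i ≤ α * ∑ k, v k (S k)) :=
  stmt11_general v hxos A hAdisj hAcover pstar zstar hdual
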